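/- arXiv:1411.6116 — 3 statements merged into one kernel-verified Lean document; each statement's English description precedes it below -/
import Mathlib

section
/- Let p ∈ ℕ with p ≥ 1 and r > 0. If f : ℝ → ℝ is nonnegative and measurable, then (∫₀^∞ (∫₀^x f(y) dy)^p x^{-r-1} dx)^{1/p} ≤ (p/r) (∫₀^∞ (y f(y))^p y^{-r-1} dy)^{1/p}. -/
/-!
With `s = r / p`, Hölder's inequality on `(0, x]` against the weight `y ^ (s - 1)` gives
`(∫₀ˣ f) ^ p ≤ (x ^ s / s) ^ (p - 1) ∫₀ˣ f ^ p y ^ ((s - 1)(1 - p))`. The factor `x ^ (s (p - 1))`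
turns `x ^ (-r - 1)` into `x ^ (-s - 1)`, and after exchanging the order of integration
`∫_y^∞ x ^ (-s - 1) dx = y ^ (-s) / s` leaves exactly the weight `y ^ (p - r - 1)` of the
right-hand side, with total constant `s ^ (-p) = (p / r) ^ p`.
-/

open MeasureTheory Set ENNReal

theorem ENNReal.lintegral_rpow_le_lintegral_mul_rpow_mul {α : Type*} [MeasurableSpace α]
    (μ : Measure α) {p : ℝ} (hp : 1 ≤ p) {f v : α → ℝ≥0∞} (hf : AEMeasurable f μ)
    (hv : AEMeasurable v μ) (hv₀ : ∀ᵐ x ∂μ, v x ≠ 0) (hv_top : ∀ᵐ x ∂μ, v x ≠ ∞) :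
    (∫⁻ x, f x ∂μ) ^ p ≤ (∫⁻ x, f x ^ p * v x ^ (1 - p) ∂μ) * (∫⁻ x, v x ∂μ) ^ (p - 1) := by
  rcases hp.eq_or_lt with rfl | hp
  · simp
  have hpq : p.HolderConjugate p.conjExponent := .conjExponent hp
  have hp₀ : p ≠ 0 := hpq.ne_zero
  have hsplit : f =ᵐ[μ] (f * fun x ↦ v x ^ ((1 - p) / p)) * fun x ↦ v x ^ ((p - 1) / p) := by
    filter_upwards [hv₀, hv_top] with x h₀ h_top
    rw [Pi.mul_apply, Pi.mul_apply, mul_assoc, ← rpow_add _ _ h₀ h_top, ← add_div,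
      sub_add_sub_cancel, sub_self, zero_div, rpow_zero, mul_one]
  have holder := lintegral_mul_le_Lp_mul_Lq μ hpq (hf.mul (hv.pow_const ((1 - p) / p)))
    (hv.pow_const ((p - 1) / p))
  rw [← lintegral_congr_ae hsplit] at holder
  have hfirst : ∀ x, (f x * v x ^ ((1 - p) / p)) ^ p = f x ^ p * v x ^ (1 - p) := fun x ↦ by
    rw [mul_rpow_of_nonneg _ _ hpq.nonneg, ← rpow_mul, div_mul_cancel₀ _ hp₀]
  have hsecond : ∀ x, (v x ^ ((p - 1) / p)) ^ p.conjExponent = v x := fun x ↦ by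
    rw [← rpow_mul, div_mul_eq_mul_div, hpq.sub_one_mul_conj, div_self hp₀, rpow_one]
  simp only [Pi.mul_apply, hfirst, hsecond] at holder
  calc (∫⁻ x, f x ∂μ) ^ p
      ≤ ((∫⁻ x, f x ^ p * v x ^ (1 - p) ∂μ) ^ (1 / p) *
          (∫⁻ x, v x ∂μ) ^ (1 / p.conjExponent)) ^ p := rpow_le_rpow holder hpq.nonneg
    _ = _ := by
      rw [mul_rpow_of_nonneg _ _ hpq.nonneg, ← rpow_mul, ← rpow_mul, one_div_mul_cancel hp₀,
        rpow_one, one_div_mul_eq_div, hpq.div_conj_eq_sub_one]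

theorem lintegral_Ioc_zero_ofReal_rpow {c x : ℝ} (hc : -1 < c) (hx : 0 ≤ x) :
    ∫⁻ y in Ioc 0 x, ENNReal.ofReal (y ^ c) = ENNReal.ofReal (x ^ (c + 1) / (c + 1)) := by
  rw [← ofReal_integral_eq_lintegral_ofReal (intervalIntegral.intervalIntegrable_rpow' hc).1
    ((ae_restrict_mem measurableSet_Ioc).mono fun y hy ↦ Real.rpow_nonneg hy.1.le c),
    ← intervalIntegral.integral_of_le hx, integral_rpow (Or.inl hc),
    Real.zero_rpow (by linarith), sub_zero]

theorem lintegral_Ici_ofReal_rpow {c x : ℝ} (hc : c < -1) (hx : 0 < x) :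
    ∫⁻ y in Ici x, ENNReal.ofReal (y ^ c) = ENNReal.ofReal (-x ^ (c + 1) / (c + 1)) := by
  rw [← setLIntegral_congr Ioi_ae_eq_Ici, ← integral_Ioi_rpow_of_lt hc hx,
    ofReal_integral_eq_lintegral_ofReal (integrableOn_Ioi_rpow_of_lt hc hx)
    ((ae_restrict_mem measurableSet_Ioi).mono fun y hy ↦ Real.rpow_nonneg (hx.trans hy).le c)]

theorem lintegral_Ioi_mul_lintegral_Ioc (μ : Measure ℝ) [SFinite μ] (a : ℝ)
    {w g : ℝ → ℝ≥0∞} (hw : Measurable w) (hg : Measurable g) :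
    ∫⁻ x in Ioi a, w x * ∫⁻ y in Ioc a x, g y ∂μ ∂μ
      = ∫⁻ y in Ioi a, g y * ∫⁻ x in Ici y, w x ∂μ ∂μ := by
  have hmeas : Measurable (Function.uncurry fun x y ↦ w x * (Iic x).indicator g y) :=
    (hw.comp measurable_fst).mul
      ((hg.comp measurable_snd).indicator (measurableSet_le measurable_snd measurable_fst))
  calc ∫⁻ x in Ioi a, w x * ∫⁻ y in Ioc a x, g y ∂μ ∂μ
      = ∫⁻ x in Ioi a, ∫⁻ y in Ioi a, w x * (Iic x).indicator g y ∂μ ∂μ := by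
        refine lintegral_congr fun x ↦ ?_
        rw [lintegral_const_mul _ (hg.indicator measurableSet_Iic),
          setLIntegral_indicator measurableSet_Iic, inter_comm, Ioi_inter_Iic]
    _ = ∫⁻ y in Ioi a, ∫⁻ x in Ioi a, w x * (Iic x).indicator g y ∂μ ∂μ :=
        lintegral_lintegral_swap hmeas.aemeasurable
    _ = ∫⁻ y in Ioi a, g y * ∫⁻ x in Ici y, w x ∂μ ∂μ := by
        refine setLIntegral_congr_fun measurableSet_Ioi fun y hy ↦ ?_
        have hind : ∀ x, w x * (Iic x).indicator g y = (Ici y).indicator w x * g y := fun x ↦ by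
          by_cases hyx : y ≤ x <;> simp [hyx]
        simp_rw [hind]
        rw [lintegral_mul_const _ (hw.indicator measurableSet_Ici),
          setLIntegral_indicator measurableSet_Ici,
          inter_eq_left.mpr (Ici_subset_Ioi.mpr hy), mul_comm]

theorem rpow_lintegral_Ioc_zero_mul_le {p r s x : ℝ} (hp : 1 ≤ p) (hs : 0 < s)
    (hsp : s * p = r) (hx : 0 < x) {g : ℝ → ℝ≥0∞} (hg : Measurable g) :
    (∫⁻ y in Ioc 0 x, g y) ^ p * ENNReal.ofReal (x ^ (-r - 1))
      ≤ ENNReal.ofReal (s ^ (1 - p)) * (ENNReal.ofReal (x ^ (-s - 1))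
        * ∫⁻ y in Ioc 0 x, g y ^ p * ENNReal.ofReal (y ^ ((s - 1) * (1 - p)))) := by
  have hpos : ∀ᵐ y ∂volume.restrict (Ioc 0 x), 0 < y :=
    (ae_restrict_mem measurableSet_Ioc).mono fun y hy ↦ hy.1
  have holder := lintegral_rpow_le_lintegral_mul_rpow_mul _ hp hg.aemeasurable
    (v := fun y ↦ ENNReal.ofReal (y ^ (s - 1))) (by fun_prop)
    (hpos.mono fun y hy ↦ by simpa using Real.rpow_pos_of_pos hy _) (by simp)
  rw [lintegral_Ioc_zero_ofReal_rpow (by linarith) hx.le, sub_add_cancel,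
    ENNReal.ofReal_rpow_of_pos (by positivity), mul_comm] at holder
  have hweight : (x ^ s / s) ^ (p - 1) * x ^ (-r - 1) = s ^ (1 - p) * x ^ (-s - 1) := by
    rw [Real.div_rpow (by positivity) hs.le, ← Real.rpow_mul hx.le, div_mul_eq_mul_div,
      ← Real.rpow_add hx, show 1 - p = -(p - 1) by ring, Real.rpow_neg hs.le,
      show s * (p - 1) + (-r - 1) = -s - 1 by linear_combination hsp]
    ring
  calc (∫⁻ y in Ioc 0 x, g y) ^ p * ENNReal.ofReal (x ^ (-r - 1))
      ≤ ENNReal.ofReal ((x ^ s / s) ^ (p - 1))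
          * (∫⁻ y in Ioc 0 x, g y ^ p * ENNReal.ofReal (y ^ (s - 1)) ^ (1 - p))
          * ENNReal.ofReal (x ^ (-r - 1)) := mul_le_mul_left holder _
    _ = _ := by
      rw [mul_right_comm, ← ENNReal.ofReal_mul (by positivity), hweight,
        ENNReal.ofReal_mul (by positivity), mul_assoc]
      refine congrArg _ (congrArg _ (lintegral_congr_ae ?_))
      filter_upwards [hpos] with y hy
      rw [ENNReal.ofReal_rpow_of_pos (Real.rpow_pos_of_pos hy _), ← Real.rpow_mul hy.le]

theorem lintegral_hardy_le {p r : ℝ} (hp : 1 ≤ p) (hr : 0 < r) {g : ℝ → ℝ≥0∞}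
    (hg : Measurable g) :
    ∫⁻ x in Ioi 0, (∫⁻ y in Ioc 0 x, g y) ^ p * ENNReal.ofReal (x ^ (-r - 1))
      ≤ ENNReal.ofReal (p / r) ^ p
        * ∫⁻ y in Ioi 0, (ENNReal.ofReal y * g y) ^ p * ENNReal.ofReal (y ^ (-r - 1)) := by
  set s := r / p with hs_def
  have hp₀ : 0 < p := by linarith
  have hs : 0 < s := by positivity
  have hsp : s * p = r := div_mul_cancel₀ r hp₀.ne'
  have hconst : s ^ (1 - p) * s⁻¹ = (p / r) ^ p := by
    rw [← Real.rpow_neg_one, ← Real.rpow_add hs, sub_add_eq_add_sub, add_neg_cancel, zero_sub,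
      Real.rpow_neg hs.le, ← Real.inv_rpow hs.le, hs_def, inv_div]
  calc ∫⁻ x in Ioi 0, (∫⁻ y in Ioc 0 x, g y) ^ p * ENNReal.ofReal (x ^ (-r - 1))
      ≤ ∫⁻ x in Ioi 0, ENNReal.ofReal (s ^ (1 - p)) * (ENNReal.ofReal (x ^ (-s - 1))
          * ∫⁻ y in Ioc 0 x, g y ^ p * ENNReal.ofReal (y ^ ((s - 1) * (1 - p)))) :=
        setLIntegral_mono' measurableSet_Ioi fun _ hx ↦
          rpow_lintegral_Ioc_zero_mul_le hp hs hsp hx hg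
    _ = ENNReal.ofReal (s ^ (1 - p)) * ∫⁻ y in Ioi 0, g y ^ p
          * ENNReal.ofReal (y ^ ((s - 1) * (1 - p)))
          * ∫⁻ x in Ici y, ENNReal.ofReal (x ^ (-s - 1)) := by
        rw [lintegral_const_mul' _ _ ofReal_ne_top, lintegral_Ioi_mul_lintegral_Ioc _ _
          (by fun_prop) (by fun_prop)]
    _ = ENNReal.ofReal (s ^ (1 - p)) * ∫⁻ y in Ioi 0, ENNReal.ofReal s⁻¹
          * ((ENNReal.ofReal y * g y) ^ p * ENNReal.ofReal (y ^ (-r - 1))) := by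
        refine congrArg _ (setLIntegral_congr_fun measurableSet_Ioi fun y (hy : 0 < y) ↦ ?_)
        have hweight : y ^ ((s - 1) * (1 - p)) * (-y ^ (-s - 1 + 1) / (-s - 1 + 1))
            = s⁻¹ * (y ^ p * y ^ (-r - 1)) := by
          rw [sub_add_cancel, neg_div_neg_eq, div_eq_mul_inv, ← mul_assoc, ← Real.rpow_add hy,
            ← Real.rpow_add hy, show (s - 1) * (1 - p) + -s = p + (-r - 1) by
              linear_combination -hsp]
          ring
        rw [lintegral_Ici_ofReal_rpow (by linarith) hy, mul_rpow_of_nonneg _ _ hp₀.le,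
          ENNReal.ofReal_rpow_of_pos hy, mul_assoc, ← ENNReal.ofReal_mul (by positivity),
          hweight, ENNReal.ofReal_mul (by positivity), ENNReal.ofReal_mul (by positivity)]
        ring
    _ = ENNReal.ofReal (p / r) ^ p
          * ∫⁻ y in Ioi 0, (ENNReal.ofReal y * g y) ^ p * ENNReal.ofReal (y ^ (-r - 1)) := by
        rw [lintegral_const_mul' _ _ ofReal_ne_top, ← mul_assoc,
          ← ENNReal.ofReal_mul (by positivity), hconst, ENNReal.ofReal_rpow_of_pos (by positivity)]

theorem hardy_first_general (p : ℕ) (hp : 1 ≤ p) (r : ℝ) (hr : 0 < r)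
    (f : ℝ → ℝ) (hf : Measurable f) :
    (∫⁻ x in Ioi (0:ℝ),
        (∫⁻ y in Ioc (0:ℝ) x, ENNReal.ofReal (f y)) ^ p * ENNReal.ofReal (x ^ (-r - 1)))
      ^ (1 / (p : ℝ))
    ≤ ENNReal.ofReal ((p : ℝ) / r) *
      (∫⁻ y in Ioi (0:ℝ),
        ENNReal.ofReal (y * f y) ^ p * ENNReal.ofReal (y ^ (-r - 1))) ^ (1 / (p : ℝ)) := by
  have hp₀ : (0 : ℝ) < p := by exact_mod_cast hp
  have hardy := lintegral_hardy_le (p := p) (by exact_mod_cast hp) hr hf.ennreal_ofReal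
  have hrhs : ∫⁻ y in Ioi 0, (ENNReal.ofReal y * ENNReal.ofReal (f y)) ^ p
        * ENNReal.ofReal (y ^ (-r - 1))
      = ∫⁻ y in Ioi 0, ENNReal.ofReal (y * f y) ^ p * ENNReal.ofReal (y ^ (-r - 1)) :=
    setLIntegral_congr_fun measurableSet_Ioi fun y (hy : 0 < y) ↦ by
      rw [ENNReal.ofReal_mul hy.le]
  simp only [rpow_natCast, hrhs] at hardy
  refine (rpow_le_rpow hardy (by positivity)).trans_eq ?_
  rw [mul_rpow_of_nonneg _ _ (by positivity), ← rpow_natCast, ← rpow_mul,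
    mul_one_div_cancel hp₀.ne', rpow_one]

/-- Hardy's inequality, first form. -/
theorem hardy_first (p : ℕ) (hp : 1 ≤ p) (r : ℝ) (hr : 0 < r)
    (f : ℝ → ℝ) (hf : Measurable f) (hfnn : ∀ x, 0 ≤ f x) :
    (∫⁻ x in Ioi (0:ℝ),
        (∫⁻ y in Ioc (0:ℝ) x, ENNReal.ofReal (f y)) ^ p * ENNReal.ofReal (x ^ (-r - 1)))
      ^ (1 / (p : ℝ))
    ≤ ENNReal.ofReal ((p : ℝ) / r) *
      (∫⁻ y in Ioi (0:ℝ),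
        ENNReal.ofReal (y * f y) ^ p * ENNReal.ofReal (y ^ (-r - 1))) ^ (1 / (p : ℝ)) :=
  hardy_first_general p hp r hr f hf
end

section
/- Let p ∈ ℕ with p ≥ 1 and r > 0. If f : ℝ → ℝ is nonnegative and measurable, then (∫₀^∞ (∫_x^∞ f(y) dy)^p x^{r-1} dx)^{1/p} ≤ (p/r) (∫₀^∞ (y f(y))^p y^{r-1} dy)^{1/p}. -/
open MeasureTheory Set ENNReal

/-!
Put `g = ofReal ∘ f`, `s = r / p` and `v y = y ^ (-(1 + s))`. Writing
`g = (g ^ p * v ^ (1 - p)) ^ (1 / p) * v ^ (1 - 1 / p)`, Hölder's inequality on `(x, ∞)` gives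
`(∫_x^∞ g) ^ p ≤ (x ^ (-s) / s) ^ (p - 1) * ∫_x^∞ g ^ p v ^ (1 - p)` (an equality when `p = 1`).
Multiply by `x ^ (r - 1)`, integrate over `x > 0` and exchange the order of integration: the inner
integral `∫_0^y x ^ (s - 1) dx = y ^ s / s` turns the weights into `y ^ (p + r - 1)` and the
constants into `(p / r) ^ p`.
-/

lemma ofReal_rpow_mul_ofReal_rpow {x : ℝ} (hx : 0 < x) (a b : ℝ) :
    ENNReal.ofReal (x ^ a) * ENNReal.ofReal (x ^ b) = ENNReal.ofReal (x ^ (a + b)) := by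
  rw [← ENNReal.ofReal_mul (by positivity), Real.rpow_add hx]

lemma ofReal_rpow_rpow {x : ℝ} (hx : 0 < x) (a b : ℝ) :
    ENNReal.ofReal (x ^ a) ^ b = ENNReal.ofReal (x ^ (a * b)) := by
  rw [ENNReal.ofReal_rpow_of_pos (by positivity), ← Real.rpow_mul hx.le]

lemma setLIntegral_Ioi_Ioi_swap (μ : Measure ℝ) [SFinite μ] (a : ℝ) {g : ℝ → ℝ → ℝ≥0∞}
    (hg : Measurable (Function.uncurry g)) :
    ∫⁻ x in Ioi a, ∫⁻ y in Ioi x, g x y ∂μ ∂μ = ∫⁻ y in Ioi a, ∫⁻ x in Ioo a y, g x y ∂μ ∂μ := by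
  have hG : Measurable (Function.uncurry fun x y => (Ioi x).indicator (g x) y) :=
    hg.indicator (measurableSet_lt measurable_fst measurable_snd)
  calc ∫⁻ x in Ioi a, ∫⁻ y in Ioi x, g x y ∂μ ∂μ
      = ∫⁻ x in Ioi a, ∫⁻ y in Ioi a, (Ioi x).indicator (g x) y ∂μ ∂μ := by
        refine setLIntegral_congr_fun measurableSet_Ioi fun x hx => ?_
        rw [setLIntegral_indicator measurableSet_Ioi, Ioi_inter_Ioi, sup_eq_left.mpr hx.le]
    _ = ∫⁻ y in Ioi a, ∫⁻ x in Ioi a, (Iio y).indicator (fun x => g x y) x ∂μ ∂μ :=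
        lintegral_lintegral_swap hG.aemeasurable
    _ = ∫⁻ y in Ioi a, ∫⁻ x in Ioo a y, g x y ∂μ ∂μ := by
        simp only [setLIntegral_indicator measurableSet_Iio, Iio_inter_Ioi]

lemma lintegral_Ioo_zero_ofReal_rpow {s y : ℝ} (hs : 0 < s) (hy : 0 ≤ y) :
    ∫⁻ x in Ioo 0 y, ENNReal.ofReal (x ^ (s - 1)) = ENNReal.ofReal (y ^ s / s) := by
  have hc : -1 < s - 1 := by linarith
  have hint : IntegrableOn (fun x : ℝ => x ^ (s - 1)) (Ioc 0 y) :=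
    (intervalIntegrable_iff_integrableOn_Ioc_of_le hy).mp
      (intervalIntegral.intervalIntegrable_rpow' hc)
  rw [← ofReal_integral_eq_lintegral_ofReal (hint.mono_set Ioo_subset_Ioc_self)
      ((ae_restrict_mem measurableSet_Ioo).mono fun x hx => Real.rpow_nonneg hx.1.le _),
    ← integral_Ioc_eq_integral_Ioo, ← intervalIntegral.integral_of_le hy,
    integral_rpow (Or.inl hc), sub_add_cancel, Real.zero_rpow hs.ne', sub_zero]

lemma lintegral_Ioi_ofReal_rpow {s x : ℝ} (hs : 0 < s) (hx : 0 < x) :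
    ∫⁻ y in Ioi x, ENNReal.ofReal (y ^ (-(1 + s))) = ENNReal.ofReal (x ^ (-s) / s) := by
  have hc : -(1 + s) < -1 := by linarith
  rw [← ofReal_integral_eq_lintegral_ofReal (integrableOn_Ioi_rpow_of_lt hc hx)
      ((ae_restrict_mem measurableSet_Ioi).mono fun y hy => Real.rpow_nonneg (hx.trans hy).le _),
    integral_Ioi_rpow_of_lt hc hx]
  congr 1
  rw [show -(1 + s) + 1 = -s by ring, div_neg, neg_div, neg_neg]

lemma rpow_lintegral_Ioi_le {p s x : ℝ} (hp : 1 ≤ p) (hs : 0 < s) (hx : 0 < x) {g : ℝ → ℝ≥0∞}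
    (hg : AEMeasurable g (volume.restrict (Ioi x))) :
    (∫⁻ y in Ioi x, g y) ^ p ≤ ENNReal.ofReal (x ^ (-s) / s) ^ (p - 1) *
      ∫⁻ y in Ioi x, g y ^ p * ENNReal.ofReal (y ^ ((p - 1) * (1 + s))) := by
  have hp0 : 0 < p := by linarith
  have hq : 0 ≤ 1 - p⁻¹ := sub_nonneg.mpr (inv_le_one_of_one_le₀ hp)
  set w : ℝ → ℝ≥0∞ := fun y => ENNReal.ofReal (y ^ ((p - 1) * (1 + s)))
  set v : ℝ → ℝ≥0∞ := fun y => ENNReal.ofReal (y ^ (-(1 + s)))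
  have hsplit : ∀ y ∈ Ioi x, g y = (g y ^ p * w y) ^ p⁻¹ * v y ^ (1 - p⁻¹) := by
    intro y hy
    have hy : 0 < y := hx.trans hy
    rw [ENNReal.mul_rpow_of_nonneg _ _ (inv_nonneg.mpr hp0.le), ← ENNReal.rpow_mul,
      mul_inv_cancel₀ hp0.ne', ENNReal.rpow_one, mul_assoc, ofReal_rpow_rpow hy,
      ofReal_rpow_rpow hy, ofReal_rpow_mul_ofReal_rpow hy]
    convert (mul_one (g y)).symm
    rw [show (p - 1) * (1 + s) * p⁻¹ + -(1 + s) * (1 - p⁻¹) = 0 by field_simp; ring,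
      Real.rpow_zero, ENNReal.ofReal_one]
  have holder := ENNReal.lintegral_mul_norm_pow_le
    ((hg.pow_const p).mul (by fun_prop : Measurable w).aemeasurable)
    (by fun_prop : Measurable v).aemeasurable (inv_nonneg.mpr hp0.le) hq (add_sub_cancel _ _)
  simp only [Pi.mul_apply] at holder
  rw [← setLIntegral_congr_fun measurableSet_Ioi hsplit, lintegral_Ioi_ofReal_rpow hs hx] at holder
  calc (∫⁻ y in Ioi x, g y) ^ p
      ≤ ((∫⁻ y in Ioi x, g y ^ p * w y) ^ p⁻¹ * ENNReal.ofReal (x ^ (-s) / s) ^ (1 - p⁻¹)) ^ p :=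
        ENNReal.rpow_le_rpow holder hp0.le
    _ = ENNReal.ofReal (x ^ (-s) / s) ^ (p - 1) * ∫⁻ y in Ioi x, g y ^ p * w y := by
        rw [ENNReal.mul_rpow_of_nonneg _ _ hp0.le, ← ENNReal.rpow_mul, ← ENNReal.rpow_mul,
          inv_mul_cancel₀ hp0.ne', ENNReal.rpow_one, mul_comm,
          show (1 - p⁻¹) * p = p - 1 by field_simp]
lemma rpow_lintegral_Ioi_mul_rpow_le {p r x : ℝ} (hp : 1 ≤ p) (hr : 0 < r) (hx : 0 < x)
    {g : ℝ → ℝ≥0∞} (hg : AEMeasurable g (volume.restrict (Ioi x))) :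
    (∫⁻ y in Ioi x, g y) ^ p * ENNReal.ofReal (x ^ (r - 1)) ≤ ENNReal.ofReal (p / r) ^ (p - 1) *
      ((∫⁻ y in Ioi x, g y ^ p * ENNReal.ofReal (y ^ ((p - 1) * (1 + r / p)))) *
        ENNReal.ofReal (x ^ (r / p - 1))) := by
  have hp0 : 0 < p := by linarith
  have hexp : -(r / p) * (p - 1) + (r - 1) = r / p - 1 := by
    field_simp
    ring
  calc (∫⁻ y in Ioi x, g y) ^ p * ENNReal.ofReal (x ^ (r - 1))
      ≤ ENNReal.ofReal (x ^ (-(r / p)) / (r / p)) ^ (p - 1) *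
          (∫⁻ y in Ioi x, g y ^ p * ENNReal.ofReal (y ^ ((p - 1) * (1 + r / p)))) *
            ENNReal.ofReal (x ^ (r - 1)) := by
        gcongr
        exact rpow_lintegral_Ioi_le hp (by positivity) hx hg
    _ = _ := by
        rw [div_eq_inv_mul, inv_div, ENNReal.ofReal_mul (by positivity),
          ENNReal.mul_rpow_of_nonneg _ _ (by linarith), ofReal_rpow_rpow hx, ← hexp,
          ← ofReal_rpow_mul_ofReal_rpow hx]
        ring

theorem lintegral_rpow_lintegral_Ioi_le {p r : ℝ} (hp : 1 ≤ p) (hr : 0 < r) {g : ℝ → ℝ≥0∞}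
    (hg : Measurable g) :
    ∫⁻ x in Ioi 0, (∫⁻ y in Ioi x, g y) ^ p * ENNReal.ofReal (x ^ (r - 1))
      ≤ ENNReal.ofReal (p / r) ^ p * ∫⁻ y in Ioi 0, g y ^ p * ENNReal.ofReal (y ^ (p + r - 1)) := by
  have hp0 : 0 < p := by linarith
  have hs : 0 < r / p := by positivity
  have hC : ENNReal.ofReal (p / r) ≠ 0 := by simp [hp0, hr]
  set h : ℝ → ℝ≥0∞ := fun y => g y ^ p * ENNReal.ofReal (y ^ ((p - 1) * (1 + r / p)))
  calc ∫⁻ x in Ioi 0, (∫⁻ y in Ioi x, g y) ^ p * ENNReal.ofReal (x ^ (r - 1))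
      ≤ ∫⁻ x in Ioi 0, ENNReal.ofReal (p / r) ^ (p - 1) *
          ((∫⁻ y in Ioi x, h y) * ENNReal.ofReal (x ^ (r / p - 1))) :=
        setLIntegral_mono' measurableSet_Ioi fun x hx =>
          rpow_lintegral_Ioi_mul_rpow_le hp hr hx hg.aemeasurable
    _ = ENNReal.ofReal (p / r) ^ (p - 1) *
          ∫⁻ y in Ioi 0, h y * ∫⁻ x in Ioo 0 y, ENNReal.ofReal (x ^ (r / p - 1)) := by
        simp only [← lintegral_mul_const' _ _ ENNReal.ofReal_ne_top]
        rw [lintegral_const_mul' _ _ (rpow_ne_top_of_nonneg (by linarith) ofReal_ne_top),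
          setLIntegral_Ioi_Ioi_swap _ _ (by fun_prop)]
        simp only [lintegral_const_mul _ (by fun_prop :
          Measurable fun x : ℝ => ENNReal.ofReal (x ^ (r / p - 1)))]
    _ = ENNReal.ofReal (p / r) ^ (p - 1) * ENNReal.ofReal (p / r) *
          ∫⁻ y in Ioi 0, g y ^ p * ENNReal.ofReal (y ^ (p + r - 1)) := by
        rw [mul_assoc, ← lintegral_const_mul' _ _ ENNReal.ofReal_ne_top]
        congr 1
        refine setLIntegral_congr_fun measurableSet_Ioi fun y (hy : 0 < y) => ?_
        have hexp : (p - 1) * (1 + r / p) + r / p = p + r - 1 := by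
          field_simp
          ring
        rw [lintegral_Ioo_zero_ofReal_rpow hs hy.le, div_eq_inv_mul, inv_div,
          ENNReal.ofReal_mul (by positivity), ← hexp, ← ofReal_rpow_mul_ofReal_rpow hy]
        ring
    _ = ENNReal.ofReal (p / r) ^ p *
          ∫⁻ y in Ioi 0, g y ^ p * ENNReal.ofReal (y ^ (p + r - 1)) := by
        congr 1
        simpa using (ENNReal.rpow_add (p - 1) 1 hC ENNReal.ofReal_ne_top).symm

theorem hardy_second_general (p : ℕ) (hp : 1 ≤ p) (r : ℝ) (hr : 0 < r)
    (f : ℝ → ℝ) (hf : Measurable f) :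
    (∫⁻ x in Ioi (0:ℝ),
        (∫⁻ y in Ioi x, ENNReal.ofReal (f y)) ^ p * ENNReal.ofReal (x ^ (r - 1)))
      ^ (1 / (p : ℝ))
    ≤ ENNReal.ofReal ((p : ℝ) / r) *
      (∫⁻ y in Ioi (0:ℝ),
        ENNReal.ofReal (y * f y) ^ p * ENNReal.ofReal (y ^ (r - 1))) ^ (1 / (p : ℝ)) := by
  have hp0 : (0 : ℝ) < p := by exact_mod_cast hp
  have hweight : ∀ y ∈ Ioi (0 : ℝ), ENNReal.ofReal (y * f y) ^ p * ENNReal.ofReal (y ^ (r - 1)) =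
      ENNReal.ofReal (f y) ^ p * ENNReal.ofReal (y ^ ((p : ℝ) + r - 1)) := fun y (hy : 0 < y) => by
    rw [ENNReal.ofReal_mul hy.le, mul_pow, mul_comm (_ ^ p), mul_assoc, ← ENNReal.ofReal_pow hy.le,
      ← Real.rpow_natCast, ofReal_rpow_mul_ofReal_rpow hy, add_sub_assoc]
  have key := lintegral_rpow_lintegral_Ioi_le (p := p) (by exact_mod_cast hp) hr hf.ennreal_ofReal
  simp only [ENNReal.rpow_natCast] at key
  rw [setLIntegral_congr_fun measurableSet_Ioi hweight]
  calc _ ≤ (ENNReal.ofReal (p / r) ^ p *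
          ∫⁻ y in Ioi 0, ENNReal.ofReal (f y) ^ p * ENNReal.ofReal (y ^ ((p : ℝ) + r - 1)))
            ^ (1 / (p : ℝ)) := ENNReal.rpow_le_rpow key (by positivity)
    _ = _ := by
      rw [ENNReal.mul_rpow_of_nonneg _ _ (by positivity), ← ENNReal.rpow_natCast,
        ← ENNReal.rpow_mul, mul_one_div_cancel hp0.ne', ENNReal.rpow_one]

/-- Hardy's inequality, second form. -/
theorem hardy_second (p : ℕ) (hp : 1 ≤ p) (r : ℝ) (hr : 0 < r)
    (f : ℝ → ℝ) (hf : Measurable f) (hfnn : ∀ x, 0 ≤ f x) :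
    (∫⁻ x in Ioi (0:ℝ),
        (∫⁻ y in Ioi x, ENNReal.ofReal (f y)) ^ p * ENNReal.ofReal (x ^ (r - 1)))
      ^ (1 / (p : ℝ))
    ≤ ENNReal.ofReal ((p : ℝ) / r) *
      (∫⁻ y in Ioi (0:ℝ),
        ENNReal.ofReal (y * f y) ^ p * ENNReal.ofReal (y ^ (r - 1))) ^ (1 / (p : ℝ)) :=
  hardy_second_general p hp r hr f hf
end

section
/- Let φ : ℝ^{n-1} → ℝ be Lipschitz with Lipschitz constant M, and let Ω = {(x', x_n) ∈ ℝⁿ : x_n > φ(x')}. Then for every point (x', x_n) with x_n < φ(x'), one has dist((x', x_n), closure(Ω)) ≥ (φ(x') − x_n) / √(1 + M²). -/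
open Set Metric

/-! If `y` lies on or above the graph of `φ`, the Lipschitz bound gives
`φ x' - xₙ ≤ M ‖x' - y'‖ + |xₙ - yₙ|`, and Cauchy–Schwarz bounds the right-hand side by
`√(1 + M²) ‖x - y‖`. -/

theorem mul_add_mul_le_sqrt_mul_sqrt (a b c d : ℝ) :
    a * c + b * d ≤ √(a ^ 2 + b ^ 2) * √(c ^ 2 + d ^ 2) := by
  rw [← Real.sqrt_mul (by positivity)]
  exact Real.le_sqrt_of_sq_le (by nlinarith [sq_nonneg (a * d - b * c)])

theorem LipschitzWith.sub_le_mul_dist_add_dist {E : Type*} [PseudoMetricSpace E] {M : NNReal}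
    {φ : E → ℝ} (hφ : LipschitzWith M φ) {u v : E} {s t : ℝ} (hv : φ v ≤ t) :
    φ u - s ≤ M * dist u v + dist s t := by
  have hu : φ u - φ v ≤ M * dist u v := (le_abs_self _).trans (hφ.dist_le_mul u v)
  have hs : t - s ≤ dist s t := by rw [Real.dist_eq, abs_sub_comm]; exact le_abs_self _
  linarith

theorem LipschitzWith.sub_div_sqrt_le_dist {E : Type*} [SeminormedAddCommGroup E] {M : NNReal}
    {φ : E → ℝ} (hφ : LipschitzWith M φ) {x y : WithLp 2 (E × ℝ)} (hy : φ y.fst ≤ y.snd) :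
    (φ x.fst - x.snd) / √(1 + (M : ℝ) ^ 2) ≤ dist x y := by
  rw [div_le_iff₀' (by positivity), WithLp.prod_dist_eq_of_L2]
  calc φ x.fst - x.snd ≤ M * dist x.fst y.fst + 1 * dist x.snd y.snd := by
        simpa using hφ.sub_le_mul_dist_add_dist (u := x.fst) (s := x.snd) hy
    _ ≤ _ := by
        simpa [add_comm] using
          mul_add_mul_le_sqrt_mul_sqrt M 1 (dist x.fst y.fst) (dist x.snd y.snd)

theorem infDist_ge_of_below_graph_general (m : ℕ) (M : NNReal)
    (φ : EuclideanSpace ℝ (Fin m) → ℝ) (hφ : LipschitzWith M φ)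
    (Ω : Set (WithLp 2 (EuclideanSpace ℝ (Fin m) × ℝ)))
    (hΩ : Ω = {x | φ (WithLp.equiv 2 _ x).1 < (WithLp.equiv 2 _ x).2})
    (x : WithLp 2 (EuclideanSpace ℝ (Fin m) × ℝ)) :
    (φ (WithLp.equiv 2 _ x).1 - (WithLp.equiv 2 _ x).2) / Real.sqrt (1 + (M : ℝ) ^ 2)
      ≤ infDist x (closure Ω) := by
  have hne : Ω.Nonempty := ⟨WithLp.toLp 2 (x.fst, φ x.fst + 1), by simp [hΩ]⟩
  rw [infDist_closure, le_infDist hne, hΩ]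
  exact fun y hy => hφ.sub_div_sqrt_le_dist hy.le

/-- Lower bound on the distance to the closure of a special Lipschitz domain. -/
theorem infDist_ge_of_below_graph (m : ℕ) (M : NNReal)
    (φ : EuclideanSpace ℝ (Fin m) → ℝ) (hφ : LipschitzWith M φ)
    (Ω : Set (WithLp 2 (EuclideanSpace ℝ (Fin m) × ℝ)))
    (hΩ : Ω = {x | φ (WithLp.equiv 2 _ x).1 < (WithLp.equiv 2 _ x).2})
    (x : WithLp 2 (EuclideanSpace ℝ (Fin m) × ℝ))
    (hx : (WithLp.equiv 2 _ x).2 < φ (WithLp.equiv 2 _ x).1) :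
    (φ (WithLp.equiv 2 _ x).1 - (WithLp.equiv 2 _ x).2) / Real.sqrt (1 + (M : ℝ) ^ 2)
      ≤ infDist x (closure Ω) :=
  infDist_ge_of_below_graph_general m M φ hφ Ω hΩ x
end
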